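/- arXiv:2505.10403 — 2 statements merged into one kernel-verified Lean document; each statement's English description precedes it below -/
import Mathlib

section
/- The lattice in ℤ² generated by the rows of [[(d+1)/2, (d-1)/2], [-(d-1)/2, (d+1)/2]] (for odd integer d ≥ 1) has determinant (d²+1)/2 and minimum ℓ₁ norm of a nonzero lattice vector equal to d. -/
/-- The lattice in ℤ² generated by the rows of [[(d+1)/2, (d-1)/2], [-(d-1)/2, (d+1)/2]]
(d odd, d ≥ 1) has determinant (d²+1)/2 and minimum ℓ₁ norm of a nonzero lattice vector d. -/
theorem stmt_1 (d : ℤ) (hd : 1 ≤ d) (ho : Odd d) :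
    |(!![(d+1)/2, (d-1)/2; -((d-1)/2), (d+1)/2]).det| = (d ^ 2 + 1) / 2 ∧
    IsLeast {N : ℤ | ∃ v ∈ Submodule.span ℤ
        ({![(d+1)/2, (d-1)/2], ![-((d-1)/2), (d+1)/2]} : Set (Fin 2 → ℤ)),
        v ≠ 0 ∧ N = ∑ i, |v i|} d := by
  obtain ⟨k, hk⟩ := ho
  have hk0 : 0 ≤ k := by omega
  have hp : (d+1)/2 = k+1 := by omega
  have hq : (d-1)/2 = k := by omega
  constructor
  · rw [Matrix.det_fin_two_of, hp, hq]
    have e1 : (k+1)*(k+1) - k*(-k) = 2*k*k + 2*k + 1 := by ring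
    rw [e1, abs_of_nonneg (by nlinarith)]
    have h2 : (d^2+1) = 2*(2*k*k+2*k+1) := by subst hk; ring
    rw [h2, Int.mul_ediv_cancel_left _ (by norm_num)]
  · constructor
    · refine ⟨![(d+1)/2, (d-1)/2], Submodule.subset_span (Set.mem_insert _ _), ?_, ?_⟩
      · intro h
        have h0 := congrFun h 0
        simp [hp] at h0
        omega
      · rw [Fin.sum_univ_two]
        simp only [Matrix.cons_val_zero, Matrix.cons_val_one, Matrix.head_cons, hp, hq]
        rw [abs_of_nonneg (by omega), abs_of_nonneg hk0]
        omega
    · rintro N ⟨v, hv, hv0, rfl⟩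
      rw [Submodule.mem_span_pair] at hv
      obtain ⟨m, n, hmn⟩ := hv
      have hx : v 0 = m*(k+1) + n*(-k) := by
        rw [← hmn]; simp [hp, hq, mul_comm]
      have hy : v 1 = m*k + n*(k+1) := by
        rw [← hmn]; simp [hp, hq, mul_comm]
      rw [Fin.sum_univ_two]
      set x := v 0 with hxdef
      set y := v 1 with hydef
      by_contra hlt
      push_neg at hlt
      have hd1 : |x| + |y| ≤ d - 1 := by omega
      have key : ∀ a : ℤ, (a * (d^2+1) = d*(x+y) - (y-x) ∨ a * (d^2+1) = (x+y) + d*(y-x)) → a = 0 := by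
        intro a ha
        have hb : |a| * (d^2+1) ≤ (d+1)*(|x|+|y|) := by
          have h1 : |a * (d^2+1)| = |a| * (d^2+1) := by
            rw [abs_mul, abs_of_nonneg (show (0:ℤ) ≤ d^2+1 by positivity)]
          rcases ha with ha | ha
          · calc |a| * (d^2+1) = |d*(x+y) - (y-x)| := by rw [← h1, ha]
              _ ≤ |d*(x+y)| + |y-x| := abs_sub _ _
              _ ≤ d*(|x|+|y|) + (|x|+|y|) := by
                  have : |d*(x+y)| = d * |x+y| := by rw [abs_mul, abs_of_nonneg (by omega)]
                  rw [this]
                  have h3 : |x+y| ≤ |x|+|y| := abs_add_le _ _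
                  have h4 : |y-x| ≤ |y|+|x| := abs_sub _ _
                  nlinarith
              _ = (d+1)*(|x|+|y|) := by ring
          · calc |a| * (d^2+1) = |(x+y) + d*(y-x)| := by rw [← h1, ha]
              _ ≤ |x+y| + |d*(y-x)| := abs_add_le _ _
              _ ≤ (|x|+|y|) + d*(|x|+|y|) := by
                  have : |d*(y-x)| = d * |y-x| := by rw [abs_mul, abs_of_nonneg (by omega)]
                  rw [this]
                  have h3 : |x+y| ≤ |x|+|y| := abs_add_le _ _
                  have h4 : |y-x| ≤ |y|+|x| := abs_sub _ _
                  nlinarith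
              _ = (d+1)*(|x|+|y|) := by ring
        by_contra hne
        have h1 : 1 ≤ |a| := Int.one_le_abs (by omega)
        have hxy0 : 0 ≤ |x| + |y| := by positivity
        nlinarith
      have hm0 : m = 0 := key m (Or.inl (by rw [hx, hy]; subst hk; ring))
      have hn0 : n = 0 := key n (Or.inr (by rw [hx, hy]; subst hk; ring))
      apply hv0
      rw [← hmn, hm0, hn0]
      simp
end

section
/- For every positive integer t, the lattice in ℤ^(2^t) generated by the rows of the t-fold Kronecker power H^{⊗t} of the matrix H = [[1,1],[1,-1]] has ℓ₁ systole exactly 2^t, i.e., every nonzero vector in the row span over ℤ has ℓ₁ norm at least 2^t, and some nonzero lattice vector has ℓ₁ norm exactly 2^t. -/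
/-- The 2×2 Hadamard matrix. -/
def Had : Matrix (Fin 2) (Fin 2) ℤ := !![1, 1; 1, -1]

/-- The t-fold Kronecker (tensor) power of `Had`, indexed by `Fin t → Fin 2`. -/
def HadPow (t : ℕ) : Matrix (Fin t → Fin 2) (Fin t → Fin 2) ℤ :=
  fun i j => ∏ k, Had (i k) (j k)

lemma had_abs (i j : Fin 2) : |Had i j| = 1 := by
  fin_cases i <;> fin_cases j <;> decide

lemma hadPow_abs (t : ℕ) (i j : Fin t → Fin 2) : |HadPow t i j| = 1 := by
  unfold HadPow
  rw [Finset.abs_prod]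
  simp [had_abs]

lemma had_orth (a b : Fin 2) : ∑ x, Had a x * Had b x = if a = b then (2:ℤ) else 0 := by
  fin_cases a <;> fin_cases b <;> decide

lemma hadPow_orth (t : ℕ) (a b : Fin t → Fin 2) :
    ∑ j, HadPow t a j * HadPow t b j = if a = b then (2:ℤ)^t else 0 := by
  unfold HadPow
  have h1 : ∀ j : Fin t → Fin 2, (∏ k, Had (a k) (j k)) * ∏ k, Had (b k) (j k)
      = ∏ k, Had (a k) (j k) * Had (b k) (j k) := fun j => (Finset.prod_mul_distrib).symm
  simp_rw [h1]
  have h2 : (∑ j : Fin t → Fin 2, ∏ k, Had (a k) (j k) * Had (b k) (j k))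
      = ∏ k, ∑ x : Fin 2, Had (a k) x * Had (b k) x := by
    rw [Finset.prod_univ_sum]
    rw [Fintype.piFinset_univ]
  rw [h2]
  simp_rw [had_orth]
  by_cases h : a = b
  · simp [h]
  · obtain ⟨k, hk⟩ := Function.ne_iff.mp h
    rw [if_neg h]
    exact Finset.prod_eq_zero (Finset.mem_univ k) (by simp [hk])

/-- The lattice generated by the rows of H^{⊗t} has ℓ₁ systole exactly 2^t. -/
theorem stmt_2 (t : ℕ) (ht : 0 < t) :
    (∀ v ∈ Submodule.span ℤ (Set.range fun i => HadPow t i),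
        v ≠ 0 → (2 ^ t : ℤ) ≤ ∑ j, |v j|) ∧
    (∃ v ∈ Submodule.span ℤ (Set.range fun i => HadPow t i),
        v ≠ 0 ∧ ∑ j, |v j| = (2 ^ t : ℤ)) := by
  constructor
  · intro v hv hne
    rw [Submodule.mem_span_range_iff_exists_fun] at hv
    obtain ⟨c, hc⟩ := hv
    have hca : ∃ a, c a ≠ 0 := by
      by_contra h
      push_neg at h
      apply hne
      rw [← hc]
      funext j
      simp [h]
    obtain ⟨a, ha⟩ := hca
    have hvj : ∀ j, v j = ∑ i, c i * HadPow t i j := by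
      intro j
      rw [← hc]
      simp [Finset.sum_apply]
    have hkey : ∑ j, v j * HadPow t a j = c a * 2^t := by
      simp_rw [hvj, Finset.sum_mul]
      rw [Finset.sum_comm]
      have h3 : ∀ i, ∑ j, c i * HadPow t i j * HadPow t a j
          = c i * (if i = a then (2:ℤ)^t else 0) := by
        intro i
        rw [← hadPow_orth t i a, Finset.mul_sum]
        simp_rw [mul_assoc]
      simp_rw [h3]
      simp
    have h1 : (2:ℤ)^t ≤ |∑ j, v j * HadPow t a j| := by
      rw [hkey, abs_mul]
      have hc1 : (1:ℤ) ≤ |c a| := Int.one_le_abs ha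
      have hp : |(2:ℤ)^t| = 2^t := abs_of_nonneg (by positivity)
      rw [hp]
      nlinarith [pow_pos (by norm_num : (0:ℤ) < 2) t]
    have h2 : |∑ j, v j * HadPow t a j| ≤ ∑ j, |v j| := by
      calc |∑ j, v j * HadPow t a j| ≤ ∑ j, |v j * HadPow t a j| :=
            Finset.abs_sum_le_sum_abs _ _
        _ = ∑ j, |v j| := by simp [abs_mul, hadPow_abs]
    linarith
  · refine ⟨HadPow t (fun _ => 0), Submodule.subset_span ⟨_, rfl⟩, ?_, ?_⟩
    · intro h
      have := congrFun h (fun _ => 0)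
      simp [HadPow, Had] at this
    · have : ∀ j, |HadPow t (fun _ => 0) j| = 1 := fun j => hadPow_abs t _ j
      simp_rw [this]
      simp [Finset.card_univ]
end
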